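/- arXiv:1910.00811 — 3 statements merged into one kernel-verified Lean document; each statement's English description precedes it below -/
import Mathlib

section
/- Let $R \geq 1$ and let $u$ be a radial solution of the linear wave equation $\partial_t^2 u - \Delta u = 0$ on $\Omega = \mathbb{R}^3 \setminus \overline{B(0,1)}$ with Dirichlet boundary condition $u(t,1)=0$ and initial data $(u_0,u_1) \in \dot H^1_0 \times L^2$ radial. Then the sum over both time directions of the limits $\lim_{t\to\pm\infty} \int_{R+|t|}^{\infty} \big((\partial_r(ru))^2 + (\partial_t(ru))^2\big)\,dr$ equals $\int_R^{\infty} \big((\partial_r(ru_0))^2 + r^2 u_1^2\big)\,dr$. -/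
/-!
Put `w(t, r) = r u(t, r)`, so that `w_tt = w_rr` on the half-plane `r > 1`. Since the second
derivative of `w` is symmetric, the wave equation makes `(∂_r + ∂_t) w` constant along the lines
`r + t = c` and `(∂_r - ∂_t) w` constant along the lines `r - t = c`, as long as they stay in the
half-plane. Writing `F(c)`, `G(c)` for these constants, the energy density is
`(∂_r w)² + (∂_t w)² = F(r + t)² / 2 + G(r - t)² / 2`. For `r > R + |t|` with `R ≥ 1` both
characteristics through `(t, r)` reach `t = 0` at radii `> R` without leaving `r > 1`, so the
exterior energy equals `½ ∫_{R+|t|+t}^∞ F² + ½ ∫_{R+|t|-t}^∞ G²`. As `t → +∞` the first tail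
vanishes and the second integral is `½ ∫_R^∞ G²`; as `t → -∞` the roles are exchanged, and the two
limits add up to `½ ∫_R^∞ (F² + G²)`, the energy of the data on `r > R`.
-/

open MeasureTheory Filter Set Topology

section Slices

variable {E : Type*} [NormedAddCommGroup E] [NormedSpace ℝ E] {t r : ℝ}

lemma HasFDerivAt.hasDerivAt_slice_fst {F : ℝ × ℝ → E} {F' : ℝ × ℝ →L[ℝ] E}
    (h : HasFDerivAt F F' (t, r)) : HasDerivAt (fun s => F (s, r)) (F' (1, 0)) t :=
  h.comp_hasDerivAt t ((hasDerivAt_id t).prodMk (hasDerivAt_const t r))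

lemma HasFDerivAt.hasDerivAt_slice_snd {F : ℝ × ℝ → E} {F' : ℝ × ℝ →L[ℝ] E}
    (h : HasFDerivAt F F' (t, r)) : HasDerivAt (fun ρ => F (t, ρ)) (F' (0, 1)) r :=
  h.comp_hasDerivAt r ((hasDerivAt_const r t).prodMk (hasDerivAt_id r))

variable {f : ℝ × ℝ → E}

lemma ContDiffAt.deriv_deriv_slice_fst (hf : ContDiffAt ℝ 2 f (t, r)) :
    deriv (fun s => deriv (fun s' => f (s', r)) s) t
      = fderiv ℝ (fderiv ℝ f) (t, r) (1, 0) (1, 0) := by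
  have hslice : Tendsto (fun s : ℝ => (s, r)) (𝓝 t) (𝓝 (t, r)) :=
    (continuous_id.prodMk continuous_const).continuousAt
  have hinner : (fun s => deriv (fun s' => f (s', r)) s) =ᶠ[𝓝 t]
      fun s => fderiv ℝ f (s, r) (1, 0) :=
    hslice.eventually ((hf.eventually (by simp)).mono fun p hp =>
      (hp.differentiableAt two_ne_zero).hasFDerivAt) |>.mono fun s hs =>
        hs.hasDerivAt_slice_fst.deriv
  rw [hinner.deriv_eq]
  have hD := ((hf.fderiv_right (m := 1) le_rfl).differentiableAt one_ne_zero).hasFDerivAt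
  simpa using (hD.hasDerivAt_slice_fst.clm_apply (hasDerivAt_const t ((1 : ℝ), (0 : ℝ)))).deriv

lemma ContDiffAt.deriv_deriv_slice_snd (hf : ContDiffAt ℝ 2 f (t, r)) :
    deriv (fun ρ => deriv (fun ρ' => f (t, ρ')) ρ) r
      = fderiv ℝ (fderiv ℝ f) (t, r) (0, 1) (0, 1) := by
  have hslice : Tendsto (fun ρ : ℝ => (t, ρ)) (𝓝 r) (𝓝 (t, r)) :=
    (continuous_const.prodMk continuous_id).continuousAt
  have hinner : (fun ρ => deriv (fun ρ' => f (t, ρ')) ρ) =ᶠ[𝓝 r]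
      fun ρ => fderiv ℝ f (t, ρ) (0, 1) :=
    hslice.eventually ((hf.eventually (by simp)).mono fun p hp =>
      (hp.differentiableAt two_ne_zero).hasFDerivAt) |>.mono fun ρ hρ =>
        hρ.hasDerivAt_slice_snd.deriv
  rw [hinner.deriv_eq]
  have hD := ((hf.fderiv_right (m := 1) le_rfl).differentiableAt one_ne_zero).hasFDerivAt
  simpa using (hD.hasDerivAt_slice_snd.clm_apply (hasDerivAt_const r ((0 : ℝ), (1 : ℝ)))).deriv

end Slices

lemma ContinuousLinearMap.map_prod_eq {E : Type*} [NormedAddCommGroup E] [NormedSpace ℝ E]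
    (L : ℝ × ℝ →L[ℝ] E) (x y : ℝ) : L (x, y) = x • L (1, 0) + y • L (0, 1) := by
  rw [← map_smul, ← map_smul, ← map_add]
  simp

/-- `B (e₁ + σ e₂) (e₂ - σ e₁) = (1 - σ²) B e₁ e₂ + σ (B e₂ e₂ - B e₁ e₁)`. -/
lemma ContinuousLinearMap.apply_characteristic_eq_zero {B : ℝ × ℝ →L[ℝ] ℝ × ℝ →L[ℝ] ℝ}
    (hsymm : B (1, 0) (0, 1) = B (0, 1) (1, 0)) (hwave : B (1, 0) (1, 0) = B (0, 1) (0, 1))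
    {σ : ℝ} (hσ : σ * σ = 1) : B (1, σ) (-σ, 1) = 0 := by
  rw [B.map_prod_eq]
  simp only [add_apply, smul_apply]
  rw [(B (1, 0)).map_prod_eq, (B (0, 1)).map_prod_eq]
  simp only [smul_eq_mul]
  linear_combination -B (0, 1) (1, 0) * hσ - σ * hwave + hsymm

/-- `(∂_r - σ ∂_t) w` for a function `w` of `(t, r)`. -/
noncomputable def charDeriv (σ : ℝ) (w : ℝ × ℝ → ℝ) (p : ℝ × ℝ) : ℝ := fderiv ℝ w p (-σ, 1)

/-- The value of `charDeriv σ w` on the characteristic `r - σ t = c`, read off at time `t = σ`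
rather than `t = 0`, so that it stays continuous up to `c = a` for a solution on `r > a`. -/
noncomputable def charProfile (σ : ℝ) (w : ℝ × ℝ → ℝ) (c : ℝ) : ℝ := charDeriv σ w (σ, c + 1)

section HalfPlane

variable {w : ℝ × ℝ → ℝ} {a σ : ℝ}

lemma isOpen_halfPlane (a : ℝ) : IsOpen {p : ℝ × ℝ | a < p.2} :=
  isOpen_lt continuous_const continuous_snd

variable (hw : ContDiffOn ℝ 2 w {p | a < p.2})
include hw

lemma continuousOn_charProfile : ContinuousOn (charProfile σ w) (Ioi (a - 1)) := by
  have hD := hw.continuousOn_fderiv_of_isOpen (isOpen_halfPlane a) one_le_two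
  refine (ContinuousLinearMap.apply ℝ ℝ ((-σ, 1) : ℝ × ℝ)).continuous.comp_continuousOn
    (hD.comp (continuous_const.prodMk (continuous_id.add continuous_const)).continuousOn ?_)
  intro c hc
  simp only [mem_Ioi, mem_ofPred_eq] at hc ⊢
  linarith

variable (hwave : ∀ t r : ℝ, a < r →
  deriv (fun s => deriv (fun s' => w (s', r)) s) t =
    deriv (fun ρ => deriv (fun ρ' => w (t, ρ')) ρ) r)
include hwave

lemma fderiv_fderiv_apply_eq_of_wave {p : ℝ × ℝ} (hp : a < p.2) :
    fderiv ℝ (fderiv ℝ w) p (1, 0) (1, 0) = fderiv ℝ (fderiv ℝ w) p (0, 1) (0, 1) := by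
  obtain ⟨t, r⟩ := p
  have hwp : ContDiffAt ℝ 2 w (t, r) := hw.contDiffAt ((isOpen_halfPlane a).mem_nhds hp)
  rw [← hwp.deriv_deriv_slice_fst, ← hwp.deriv_deriv_slice_snd]
  exact hwave t r hp

lemma hasDerivAt_charDeriv_along (hσ : σ * σ = 1) {c τ : ℝ} (hτ : a < c + σ * τ) :
    HasDerivAt (fun τ => charDeriv σ w (τ, c + σ * τ)) 0 τ := by
  set p : ℝ × ℝ := (τ, c + σ * τ)
  have hwp : ContDiffAt ℝ 2 w p := hw.contDiffAt ((isOpen_halfPlane a).mem_nhds hτ)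
  have hγ : HasDerivAt (fun τ : ℝ => (τ, c + σ * τ)) ((1 : ℝ), σ) τ := by
    simpa using (hasDerivAt_id τ).prodMk (((hasDerivAt_id τ).const_mul σ).const_add c)
  have hD := ((hwp.fderiv_right (m := 1) le_rfl).differentiableAt one_ne_zero).hasFDerivAt
  refine (((ContinuousLinearMap.apply ℝ ℝ ((-σ, 1) : ℝ × ℝ)).hasFDerivAt.comp p hD).comp_hasDerivAt
    τ hγ).congr_deriv ?_
  exact ContinuousLinearMap.apply_characteristic_eq_zero (hwp.isSymmSndFDerivAt (by simp) _ _)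
    (fderiv_fderiv_apply_eq_of_wave hw hwave hτ) hσ

lemma charDeriv_eq_charProfile (hσ : σ * σ = 1) {t r : ℝ} (hr : a < r) (hc : a < r - σ * t + 1) :
    charDeriv σ w (t, r) = charProfile σ w (r - σ * t) := by
  set c := r - σ * t
  have hopen : IsOpen {τ | a < c + σ * τ} :=
    isOpen_lt continuous_const (continuous_const.add (continuous_const.mul continuous_id))
  have hconvex : Convex ℝ {τ | a < c + σ * τ} := by
    refine convex_iff_ordConnected.2 ⟨fun x hx y hy z hz => ?_⟩
    simp only [mem_ofPred_eq] at hx hy ⊢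
    rcases le_total 0 σ with h | h <;> nlinarith [hz.1, hz.2]
  have hderiv : ∀ τ ∈ {τ | a < c + σ * τ},
      HasDerivAt (fun τ => charDeriv σ w (τ, c + σ * τ)) 0 τ :=
    fun τ hτ => hasDerivAt_charDeriv_along hw hwave hσ hτ
  have hconst := hopen.is_const_of_deriv_eq_zero hconvex.isPreconnected
    (fun τ hτ => (hderiv τ hτ).differentiableAt.differentiableWithinAt)
    (fun τ hτ => (hderiv τ hτ).deriv) (x := t) (y := σ) (by simpa [c] using hr)
    (by simpa [c, hσ] using hc)
  simpa [c, hσ, charProfile] using hconst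

lemma sq_deriv_add_sq_deriv_eq_charProfile {t r : ℝ} (hadd : a < r + t) (hsub : a < r - t) :
    deriv (fun ρ => w (t, ρ)) r ^ 2 + deriv (fun s => w (s, r)) t ^ 2
      = charProfile (-1) w (r + t) ^ 2 / 2 + charProfile 1 w (r - t) ^ 2 / 2 := by
  have hr : a < r := by linarith
  have hd := ((hw.contDiffAt ((isOpen_halfPlane a).mem_nhds (x := (t, r)) hr)).differentiableAt
    two_ne_zero).hasFDerivAt
  have hin := charDeriv_eq_charProfile hw hwave (σ := -1) (by norm_num) (t := t) hr (by linarith)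
  have hout := charDeriv_eq_charProfile hw hwave (σ := 1) (by norm_num) (t := t) hr (by linarith)
  simp only [neg_mul, one_mul, sub_neg_eq_add] at hin hout
  rw [hd.hasDerivAt_slice_snd.deriv, hd.hasDerivAt_slice_fst.deriv, ← hin, ← hout, charDeriv,
    charDeriv, (fderiv ℝ w (t, r)).map_prod_eq (- -1), (fderiv ℝ w (t, r)).map_prod_eq (-1)]
  simp only [smul_eq_mul]
  ring

end HalfPlane

section Tails

variable {f g : ℝ → ℝ} {R : ℝ}

lemma integrableOn_Ioi_comp_add_right_iff (f : ℝ → ℝ) (b t : ℝ) :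
    IntegrableOn (fun r => f (r + t)) (Ioi b) ↔ IntegrableOn f (Ioi (b + t)) := by
  have := (measurePreserving_add_right volume t).integrableOn_comp_preimage
    (measurableEmbedding_addRight t) (f := f) (s := Ioi (b + t))
  rwa [preimage_add_const_Ioi, add_sub_cancel_right] at this

lemma setIntegral_Ioi_comp_add_right (f : ℝ → ℝ) (b t : ℝ) :
    ∫ r in Ioi b, f (r + t) = ∫ s in Ioi (b + t), f s := by
  have := (measurePreserving_add_right volume t).setIntegral_preimage_emb
    (measurableEmbedding_addRight t) f (Ioi (b + t))
  rwa [preimage_add_const_Ioi, add_sub_cancel_right] at this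

lemma tendsto_setIntegral_Ioi_atTop (hf : IntegrableOn f (Ioi R)) :
    Tendsto (fun b => ∫ s in Ioi b, f s) atTop (𝓝 0) := by
  have hempty : ⋂ b : ℝ, Ioi b = ∅ := iInter_eq_empty_iff.2 fun x => ⟨x, lt_irrefl x⟩
  simpa [hempty] using tendsto_setIntegral_of_antitone (μ := volume) (f := f)
    (fun _ => measurableSet_Ioi) (fun _ _ h => Ioi_subset_Ioi h) ⟨R, hf⟩

lemma IntegrableOn.Ioi_of_continuousOn_Icc {b : ℝ} (hf : IntegrableOn f (Ioi b))
    (hc : ContinuousOn f (Icc R b)) (hRb : R ≤ b) : IntegrableOn f (Ioi R) := by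
  rw [← Ioc_union_Ioi_eq_Ioi hRb]
  exact (hc.integrableOn_Icc.mono_set Ioc_subset_Icc_self).union hf

lemma integrableOn_Ioi_of_integrableOn_add_sub (hf₀ : 0 ≤ f) (hg₀ : 0 ≤ g)
    (hf : ContinuousOn f (Ici R)) (hg : ContinuousOn g (Ici R)) {b t : ℝ}
    (hadd : R ≤ b + t) (hsub : R ≤ b - t)
    (h : IntegrableOn (fun r => f (r + t) + g (r - t)) (Ioi b)) :
    IntegrableOn f (Ioi R) ∧ IntegrableOn g (Ioi R) := by
  have hmeas : AEStronglyMeasurable (fun r => f (r + t)) (volume.restrict (Ioi b)) :=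
    ((hf.mono (Ici_subset_Ici.2 hadd)).comp (continuous_add_const t).continuousOn
      fun r hr => by simp only [mem_Ioi, mem_Ici] at hr ⊢; linarith).aestronglyMeasurable
      measurableSet_Ioi
  obtain ⟨hft, hgt⟩ := (integrable_add_iff_of_nonneg (g := fun r => g (r - t)) hmeas
    (ae_of_all _ fun r => hf₀ (r + t)) (ae_of_all _ fun r => hg₀ (r - t))).1 h
  simp only [sub_eq_add_neg] at hgt hsub
  exact ⟨IntegrableOn.Ioi_of_continuousOn_Icc ((integrableOn_Ioi_comp_add_right_iff f b t).1 hft)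
      (hf.mono Icc_subset_Ici_self) hadd,
    IntegrableOn.Ioi_of_continuousOn_Icc ((integrableOn_Ioi_comp_add_right_iff g b (-t)).1 hgt)
      (hg.mono Icc_subset_Ici_self) hsub⟩

lemma setIntegral_Ioi_add_sub (hf : IntegrableOn f (Ioi R)) (hg : IntegrableOn g (Ioi R))
    (t : ℝ) : ∫ r in Ioi (R + |t|), (f (r + t) + g (r - t))
      = (∫ s in Ioi (R + |t| + t), f s) + ∫ s in Ioi (R + |t| - t), g s := by
  have hadd : R ≤ R + |t| + t := by linarith [neg_abs_le t]
  have hsub : R ≤ R + |t| + -t := by linarith [le_abs_self t]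
  simp only [sub_eq_add_neg]
  rw [integral_add, setIntegral_Ioi_comp_add_right, setIntegral_Ioi_comp_add_right]
  · exact (integrableOn_Ioi_comp_add_right_iff f _ _).2 (hf.mono_set (Ioi_subset_Ioi hadd))
  · exact (integrableOn_Ioi_comp_add_right_iff g _ _).2 (hg.mono_set (Ioi_subset_Ioi hsub))

theorem exists_tendsto_setIntegral_Ioi_add_sub (hf₀ : 0 ≤ f) (hg₀ : 0 ≤ g)
    (hf : ContinuousOn f (Ici R)) (hg : ContinuousOn g (Ici R)) :
    ∃ Lp Lm : ℝ,
      Tendsto (fun t => ∫ r in Ioi (R + |t|), (f (r + t) + g (r - t))) atTop (𝓝 Lp) ∧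
      Tendsto (fun t => ∫ r in Ioi (R + |t|), (f (r + t) + g (r - t))) atBot (𝓝 Lm) ∧
      Lp + Lm = ∫ r in Ioi R, (f r + g r) := by
  by_cases hfg : IntegrableOn f (Ioi R) ∧ IntegrableOn g (Ioi R)
  · obtain ⟨hfi, hgi⟩ := hfg
    simp only [setIntegral_Ioi_add_sub hfi hgi]
    refine ⟨∫ s in Ioi R, g s, ∫ s in Ioi R, f s, ?_, ?_, by rw [integral_add hfi hgi, add_comm]⟩
    · have hlim : Tendsto (fun t => R + |t| + t) atTop atTop :=
        tendsto_atTop_mono (fun t => (by linarith [abs_nonneg t] : R + t ≤ R + |t| + t))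
          (tendsto_atTop_add_const_left _ R tendsto_id)
      have hconst : (fun t => ∫ s in Ioi (R + |t| - t), g s) =ᶠ[atTop]
          fun _ => ∫ s in Ioi R, g s :=
        (eventually_ge_atTop 0).mono fun t ht => by
          dsimp only; rw [abs_of_nonneg ht, add_sub_cancel_right]
      simpa using ((tendsto_setIntegral_Ioi_atTop hfi).comp hlim).add
        (tendsto_const_nhds.congr' hconst.symm)
    · have hlim : Tendsto (fun t => R + |t| - t) atBot atTop :=
        tendsto_atTop_mono (fun t => (by linarith [abs_nonneg t] : R + -t ≤ R + |t| - t))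
          (tendsto_atTop_add_const_left _ R tendsto_neg_atBot_atTop)
      have hconst : (fun t => ∫ s in Ioi (R + |t| + t), f s) =ᶠ[atBot]
          fun _ => ∫ s in Ioi R, f s :=
        (eventually_le_atBot 0).mono fun t ht => by
          dsimp only; rw [abs_of_nonpos ht, neg_add_cancel_right]
      simpa using (tendsto_const_nhds.congr' hconst.symm).add
        ((tendsto_setIntegral_Ioi_atTop hgi).comp hlim)
  · -- No integrand is integrable, so every integral takes the junk value `0`.
    have hzero : ∀ t, ∫ r in Ioi (R + |t|), (f (r + t) + g (r - t)) = 0 := fun t =>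
      integral_undef fun h => hfg (integrableOn_Ioi_of_integrableOn_add_sub hf₀ hg₀ hf hg
        (by linarith [neg_abs_le t]) (by linarith [le_abs_self t]) h)
    refine ⟨0, 0, by simp [hzero], by simp [hzero], ?_⟩
    simpa using (hzero 0).symm

end Tails

theorem exterior_energy_linear_wave_general
    (R : ℝ) (hR : 1 ≤ R)
    (u : ℝ → ℝ → ℝ) (u0 u1 : ℝ → ℝ)
    -- regularity: u is C² on the exterior region in both variables
    (hreg : ContDiffOn ℝ 2 (fun p : ℝ × ℝ => u p.1 p.2) {p : ℝ × ℝ | 1 < p.2})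
    -- the wave equation (∂_t² - ∂_r²)(r u) = 0 for r > 1
    (hwave : ∀ t : ℝ, ∀ r : ℝ, 1 < r →
      deriv (fun s => deriv (fun s' => r * u s' r) s) t =
      deriv (fun ρ => deriv (fun ρ' => ρ' * u t ρ') ρ) r)
    -- initial data
    (hu0 : ∀ r : ℝ, 1 < r → u 0 r = u0 r)
    (hu1 : ∀ r : ℝ, 1 < r → deriv (fun s => u s r) 0 = u1 r) :
    ∃ Lp Lm : ℝ,
      Tendsto (fun t : ℝ => ∫ r in Ioi (R + |t|),
          ((deriv (fun ρ => ρ * u t ρ) r)^2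
            + (r * deriv (fun s => u s r) t)^2)) atTop (nhds Lp) ∧
      Tendsto (fun t : ℝ => ∫ r in Ioi (R + |t|),
          ((deriv (fun ρ => ρ * u t ρ) r)^2
            + (r * deriv (fun s => u s r) t)^2)) atBot (nhds Lm) ∧
      Lp + Lm = ∫ r in Ioi R,
          ((deriv (fun ρ => ρ * u0 ρ) r)^2 + r^2 * (u1 r)^2) := by
  let w : ℝ × ℝ → ℝ := fun p => p.2 * u p.1 p.2
  have hw : ContDiffOn ℝ 2 w {p | 1 < p.2} := contDiff_snd.contDiffOn.mul hreg
  have hE : (fun t : ℝ => ∫ r in Ioi (R + |t|),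
      ((deriv (fun ρ => ρ * u t ρ) r) ^ 2 + (r * deriv (fun s => u s r) t) ^ 2))
      = fun t => ∫ r in Ioi (R + |t|),
        (charProfile (-1) w (r + t) ^ 2 / 2 + charProfile 1 w (r - t) ^ 2 / 2) := by
    funext t
    refine setIntegral_congr_fun measurableSet_Ioi fun r (hr : R + |t| < r) => ?_
    rw [← deriv_const_mul_field]
    exact sq_deriv_add_sq_deriv_eq_charProfile hw hwave (by linarith [neg_abs_le t])
      (by linarith [le_abs_self t])
  have hE₀ : ∫ r in Ioi R, ((deriv (fun ρ => ρ * u0 ρ) r) ^ 2 + r ^ 2 * (u1 r) ^ 2)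
      = ∫ r in Ioi R, (charProfile (-1) w r ^ 2 / 2 + charProfile 1 w r ^ 2 / 2) := by
    refine setIntegral_congr_fun measurableSet_Ioi fun r (hr : R < r) => ?_
    have hr₁ : 1 < r := by linarith
    have hu0' : deriv (fun ρ => ρ * u0 ρ) r = deriv (fun ρ => ρ * u 0 ρ) r :=
      EventuallyEq.deriv_eq ((eventually_gt_nhds hr₁).mono fun ρ hρ => by simp only [hu0 ρ hρ])
    rw [hu0', ← hu1 r hr₁, ← mul_pow, ← deriv_const_mul_field]
    have h₀ := sq_deriv_add_sq_deriv_eq_charProfile hw hwave (t := 0) (r := r) (by linarith)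
      (by linarith)
    rwa [add_zero, sub_zero] at h₀
  have hcont (σ : ℝ) : ContinuousOn (fun c => charProfile σ w c ^ 2 / 2) (Ici R) :=
    (((continuousOn_charProfile hw).mono fun c (hc : R ≤ c) =>
      mem_Ioi.2 (by linarith)).pow 2).div_const 2
  rw [hE, hE₀]
  exact exists_tendsto_setIntegral_Ioi_add_sub (fun c => by positivity) (fun c => by positivity)
    (hcont (-1)) (hcont 1)

/-- Exterior energy identity for radial solutions of the linear wave equation
outside the unit ball of ℝ³ with Dirichlet boundary condition: the sum over
both time directions of the limiting exterior energies
`∫_{R+|t|}^∞ (∂_r(ru))² + (∂_t(ru))² dr` equals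
`∫_R^∞ (∂_r(ru₀))² + r² u₁² dr`. -/
theorem exterior_energy_linear_wave
    (R : ℝ) (hR : 1 ≤ R)
    (u : ℝ → ℝ → ℝ) (u0 u1 : ℝ → ℝ)
    -- regularity: u is C² on the exterior region in both variables
    (hreg : ContDiffOn ℝ 2 (fun p : ℝ × ℝ => u p.1 p.2) {p : ℝ × ℝ | 1 < p.2})
    -- the wave equation (∂_t² - ∂_r²)(r u) = 0 for r > 1
    (hwave : ∀ t : ℝ, ∀ r : ℝ, 1 < r →
      deriv (fun s => deriv (fun s' => r * u s' r) s) t =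
      deriv (fun ρ => deriv (fun ρ' => ρ' * u t ρ') ρ) r)
    -- Dirichlet boundary condition
    (hbdry : ∀ t : ℝ, u t 1 = 0)
    -- initial data
    (hu0 : ∀ r : ℝ, 1 < r → u 0 r = u0 r)
    (hu1 : ∀ r : ℝ, 1 < r → deriv (fun s => u s r) 0 = u1 r)
    -- finite energy: (u0, u1) ∈ Ḣ¹₀ × L² (radial)
    (hfin1 : IntegrableOn (fun r => (deriv u0 r)^2 * r^2) (Ioi 1))
    (hfin2 : IntegrableOn (fun r => (u1 r)^2 * r^2) (Ioi 1)) :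
    ∃ Lp Lm : ℝ,
      Tendsto (fun t : ℝ => ∫ r in Ioi (R + |t|),
          ((deriv (fun ρ => ρ * u t ρ) r)^2
            + (r * deriv (fun s => u s r) t)^2)) atTop (nhds Lp) ∧
      Tendsto (fun t : ℝ => ∫ r in Ioi (R + |t|),
          ((deriv (fun ρ => ρ * u t ρ) r)^2
            + (r * deriv (fun s => u s r) t)^2)) atBot (nhds Lm) ∧
      Lp + Lm = ∫ r in Ioi R,
          ((deriv (fun ρ => ρ * u0 ρ) r)^2 + r^2 * (u1 r)^2) :=
  exterior_energy_linear_wave_general R hR u u0 u1 hreg hwave hu0 hu1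
end

section
/- Let $m > 2$ be an integer and let $Q \in \dot H^1(\{|x|>1\})$ be radial, $C^2$, satisfying $-\Delta Q = |Q|^{2m}Q$ for $|x| > 1$, with $|Q(r)| \leq C r^{-1/2}$. Then there exists $\ell \in \mathbb{R}$ such that $|Q(r) - \ell/r| \leq C' r^{-(2m-1)}$ for $r$ large; in particular $rQ(r) \to \ell$ as $r \to \infty$. -/
/-! With `u = r Q` the equation becomes `u'' = -r |Q|^{2m} Q`. The radial Sobolev bound gives
`|u''| ≲ r^{-(2m-1)/2}`, which is integrable, so `u'` has a limit at infinity; the limit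
vanishes because `u' ∈ L²`. Integrating `u''` twice from infinity shows that `u` converges
(this needs `m > 2`), hence `|Q| ≲ 1/r`. Feeding this back gives `|u''| ≲ r^{-2m}`, and
integrating twice more, `|u - ℓ| ≲ r^{2-2m}`. -/

open MeasureTheory Real Set Filter Topology

theorem eq_zero_of_integrableOn_Ioi_of_tendsto {E : Type*} [NormedAddCommGroup E] {f : ℝ → E}
    {a : ℝ} {L : E} (hf : IntegrableOn f (Ioi a)) (hL : Tendsto f atTop (𝓝 L)) : L = 0 := by
  refine IntegrableAtFilter.eq_zero_of_tendsto ⟨Ioi a, Ioi_mem_atTop a, hf⟩ (fun s hs => ?_) hL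
  obtain ⟨b, hb⟩ := mem_atTop_sets.1 hs
  rw [← top_le_iff, ← volume_Ici (a := b)]
  exact measure_mono hb

section DerivativeDecay

variable {f : ℝ → ℝ} {a K p : ℝ}

theorem integrableOn_Ioi_deriv_of_abs_deriv_le_rpow (ha : 0 < a) (hp : 1 < p)
    (hbound : ∀ x, a ≤ x → |deriv f x| ≤ K * x ^ (-p)) : IntegrableOn (deriv f) (Ioi a) :=
  Integrable.mono' ((integrableOn_Ioi_rpow_of_lt (a := -p) (by linarith) ha).const_mul K)
    (measurable_deriv f).aestronglyMeasurable <| by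
      filter_upwards [ae_restrict_mem measurableSet_Ioi] with x hx using hbound x hx.le

theorem exists_tendsto_of_abs_deriv_le_rpow (ha : 0 < a) (hp : 1 < p)
    (hf : ∀ x, a ≤ x → DifferentiableAt ℝ f x)
    (hbound : ∀ x, a ≤ x → |deriv f x| ≤ K * x ^ (-p)) : ∃ L, Tendsto f atTop (𝓝 L) :=
  ⟨_, tendsto_limUnder_of_hasDerivAt_of_integrableOn_Ioi
    (fun x hx => (hf x hx.out.le).hasDerivAt)
    (integrableOn_Ioi_deriv_of_abs_deriv_le_rpow ha hp hbound)⟩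

theorem abs_sub_le_of_abs_deriv_le_rpow (ha : 0 < a) (hp : 1 < p)
    (hf : ∀ x, a ≤ x → DifferentiableAt ℝ f x)
    (hbound : ∀ x, a ≤ x → |deriv f x| ≤ K * x ^ (-p)) {L : ℝ} (hL : Tendsto f atTop (𝓝 L))
    {r : ℝ} (hr : a ≤ r) : |f r - L| ≤ K / (p - 1) * r ^ (1 - p) := by
  have hr0 : 0 < r := ha.trans_le hr
  have hbound_r : ∀ x, r ≤ x → |deriv f x| ≤ K * x ^ (-p) := fun x hx =>
    hbound x (hr.trans hx)
  have hftc : ∫ x in Ioi r, deriv f x = L - f r :=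
    integral_Ioi_of_hasDerivAt_of_tendsto' (fun x hx => (hf x (hr.trans hx)).hasDerivAt)
      (integrableOn_Ioi_deriv_of_abs_deriv_le_rpow hr0 hp hbound_r) hL
  have hmajorant : ∫ x in Ioi r, K * x ^ (-p) = K / (p - 1) * r ^ (1 - p) := by
    rw [integral_const_mul, integral_Ioi_rpow_of_lt (by linarith) hr0,
      show -p + 1 = -(p - 1) by ring, show 1 - p = -(p - 1) by ring]
    field_simp
  rw [abs_sub_comm, ← hftc, ← hmajorant, ← Real.norm_eq_abs]
  refine norm_integral_le_of_norm_le
    ((integrableOn_Ioi_rpow_of_lt (a := -p) (by linarith) hr0).const_mul K) ?_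
  filter_upwards [ae_restrict_mem measurableSet_Ioi] with x hx using hbound_r x hx.le

theorem exists_tendsto_abs_sub_le_of_abs_deriv_deriv_le_rpow (ha : 0 < a) (hp : 2 < p)
    (hf : ∀ x, a ≤ x → DifferentiableAt ℝ f x)
    (hf' : ∀ x, a ≤ x → DifferentiableAt ℝ (deriv f) x)
    (hbound : ∀ x, a ≤ x → |deriv (deriv f) x| ≤ K * x ^ (-p))
    (hf'_lim : Tendsto (deriv f) atTop (𝓝 0)) :
    ∃ L, Tendsto f atTop (𝓝 L) ∧
      ∀ r, a ≤ r → |f r - L| ≤ K / (p - 1) / (p - 2) * r ^ (2 - p) := by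
  have hbound' : ∀ x, a ≤ x → |deriv f x| ≤ K / (p - 1) * x ^ (-(p - 1)) := fun x hx => by
    have := abs_sub_le_of_abs_deriv_le_rpow ha (by linarith) hf' hbound hf'_lim hx
    rwa [sub_zero, show 1 - p = -(p - 1) by ring] at this
  obtain ⟨L, hL⟩ := exists_tendsto_of_abs_deriv_le_rpow ha (by linarith : 1 < p - 1) hf hbound'
  refine ⟨L, hL, fun r hr => ?_⟩
  convert abs_sub_le_of_abs_deriv_le_rpow ha (by linarith : 1 < p - 1) hf hbound' hL hr using 3
    <;> ring

end DerivativeDecay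

theorem abs_mul_pow_abs_mul_le {n : ℕ} {r q B c : ℝ} (hr : 0 < r) (hq : |q| ≤ B * r ^ c) :
    |r * (|q| ^ n * q)| ≤ B ^ (n + 1) * r ^ (1 + c * (n + 1)) := by
  have hpow : |q| ^ (n + 1) ≤ (B * r ^ c) ^ (n + 1) := pow_le_pow_left₀ (abs_nonneg q) hq _
  calc |r * (|q| ^ n * q)| = r * |q| ^ (n + 1) := by
        rw [abs_mul, abs_mul, abs_pow, abs_abs, abs_of_pos hr, pow_succ]
    _ ≤ r * (B * r ^ c) ^ (n + 1) := by gcongr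
    _ = B ^ (n + 1) * r ^ (1 + c * (n + 1)) := by
        rw [mul_pow, ← rpow_mul_natCast hr.le, rpow_add hr, rpow_one]; push_cast; ring

theorem hasDerivAt_deriv_mul_self {Q : ℝ → ℝ} {s : Set ℝ} (hs : IsOpen s)
    (hQ : ContDiffOn ℝ 2 Q s) {r : ℝ} (hr : r ∈ s) :
    HasDerivAt (deriv fun ρ => ρ * Q ρ) (2 * deriv Q r + r * deriv (deriv Q) r) r := by
  have hQ' : ∀ x ∈ s, HasDerivAt Q (deriv Q x) x := fun x hx =>
    ((hQ.differentiableOn (by norm_num)).differentiableAt (hs.mem_nhds hx)).hasDerivAt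
  have hQ'' : HasDerivAt (deriv Q) (deriv (deriv Q) r) r :=
    (((hQ.deriv_of_isOpen hs (by norm_num)).differentiableOn one_ne_zero).differentiableAt
      (hs.mem_nhds hr)).hasDerivAt
  have hu' : deriv (fun ρ => ρ * Q ρ) =ᶠ[𝓝 r] fun x => Q x + x * deriv Q x := by
    filter_upwards [hs.mem_nhds hr] with x hx
    exact ((hasDerivAt_id' x).mul (hQ' x hx)).deriv.trans (by ring)
  exact (((hQ' r hr).add ((hasDerivAt_id' r).mul hQ'')).congr_deriv (by ring)).congr_of_eventuallyEq
    hu'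

section RadialEquation

variable {m : ℕ} {Q : ℝ → ℝ}

theorem hasDerivAt_deriv_mul_self_of_radial_eq (hreg : ContDiffOn ℝ 2 Q (Ioi 1))
    (heq : ∀ r : ℝ, 1 < r →
      deriv (deriv Q) r + (2 / r) * deriv Q r + |Q r| ^ (2 * m) * Q r = 0)
    {r : ℝ} (hr : 1 < r) :
    HasDerivAt (deriv fun ρ => ρ * Q ρ) (-(r * (|Q r| ^ (2 * m) * Q r))) r := by
  refine (hasDerivAt_deriv_mul_self isOpen_Ioi hreg hr).congr_deriv ?_
  have h := heq r hr
  field_simp at h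
  linarith

theorem abs_deriv_deriv_mul_self_le_of_radial_eq (hreg : ContDiffOn ℝ 2 Q (Ioi 1))
    (heq : ∀ r : ℝ, 1 < r →
      deriv (deriv Q) r + (2 / r) * deriv Q r + |Q r| ^ (2 * m) * Q r = 0)
    {B c p R : ℝ} (hR : 1 < R) (hp : 1 + c * (2 * m + 1) = -p)
    (hQ : ∀ r, R ≤ r → |Q r| ≤ B * r ^ c) (r : ℝ) (hr : R ≤ r) :
    |deriv (deriv fun ρ => ρ * Q ρ) r| ≤ B ^ (2 * m + 1) * r ^ (-p) := by
  rw [(hasDerivAt_deriv_mul_self_of_radial_eq hreg heq (hR.trans_le hr)).deriv, abs_neg, ← hp]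
  exact_mod_cast abs_mul_pow_abs_mul_le (by linarith) (hQ r hr)

end RadialEquation

theorem exists_abs_le_mul_rpow_neg_one_of_tendsto_mul {Q : ℝ → ℝ} {ℓ : ℝ}
    (h : Tendsto (fun r => r * Q r) atTop (𝓝 ℓ)) (a : ℝ) :
    ∃ M R, a ≤ R ∧ ∀ r, R ≤ r → |Q r| ≤ M * r ^ (-1 : ℝ) := by
  obtain ⟨R, hR⟩ := eventually_atTop.1 <|
    (h.abs.eventually (eventually_le_nhds (lt_add_one |ℓ|))).and
      (eventually_ge_atTop (max a 1))
  refine ⟨|ℓ| + 1, max R (max a 1), le_max_of_le_right (le_max_left _ _), fun r hr => ?_⟩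
  obtain ⟨hbd, hr1⟩ := hR r (le_of_max_le_left hr)
  have hr0 : 0 < r := lt_of_lt_of_le one_pos ((le_max_right _ _).trans hr1)
  rw [abs_mul, abs_of_pos hr0] at hbd
  rw [rpow_neg_one, ← div_eq_mul_inv, le_div_iff₀ hr0, mul_comm]
  exact hbd

theorem abs_sub_div_le_of_abs_mul_sub_le {n : ℕ} {r q ℓ K : ℝ} (hr : 0 < r)
    (h : |r * q - ℓ| ≤ K * r ^ (1 - (n : ℝ))) : |q - ℓ / r| ≤ K / r ^ n := by
  have hq : q - ℓ / r = (r * q - ℓ) / r := by field_simp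
  rw [hq, abs_div, abs_of_pos hr, div_le_iff₀ hr]
  calc |r * q - ℓ| ≤ K * r ^ (1 - (n : ℝ)) := h
    _ = K / r ^ n * r := by
        rw [rpow_sub hr, rpow_one, rpow_natCast]; field_simp

theorem stationary_solution_asymptotics_general
    (m : ℕ) (hm : 2 < m) (Q : ℝ → ℝ)
    (hreg : ContDiffOn ℝ 2 Q (Ioi 1))
    (heq : ∀ r : ℝ, 1 < r →
      deriv (deriv Q) r + (2 / r) * deriv Q r + |Q r| ^ (2 * m) * Q r = 0)
    (C : ℝ)
    (hbound : ∀ r : ℝ, 1 ≤ r → |Q r| ≤ C * r ^ (-(1:ℝ)/2))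
    (henergy : IntegrableOn (fun r => (deriv (fun ρ => ρ * Q ρ) r)^2) (Ioi 1)) :
    ∃ ℓ : ℝ, ∃ C' : ℝ, ∃ R0 : ℝ, 1 < R0 ∧
      (∀ r : ℝ, R0 ≤ r → |Q r - ℓ / r| ≤ C' / r ^ (2 * m - 1)) ∧
      Tendsto (fun r => r * Q r) atTop (nhds ℓ) := by
  have hm' : (3 : ℝ) ≤ m := by exact_mod_cast hm
  have hu : ∀ r : ℝ, 1 < r → DifferentiableAt ℝ (fun ρ => ρ * Q ρ) r := fun r hr =>
    differentiableAt_id.mul ((hreg.differentiableOn (by norm_num)).differentiableAt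
      (Ioi_mem_nhds hr))
  have hu' : ∀ r : ℝ, 1 < r → DifferentiableAt ℝ (deriv fun ρ => ρ * Q ρ) r := fun r hr =>
    (hasDerivAt_deriv_mul_self_of_radial_eq hreg heq hr).differentiableAt
  have hu''_sobolev := abs_deriv_deriv_mul_self_le_of_radial_eq hreg heq (R := 2)
    (p := m - 1 / 2) one_lt_two (by ring) (fun r hr => hbound r (by linarith))
  have hu'_lim : Tendsto (deriv fun ρ => ρ * Q ρ) atTop (𝓝 0) := by
    obtain ⟨L, hL⟩ := exists_tendsto_of_abs_deriv_le_rpow two_pos (by linarith)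
      (fun r hr => hu' r (by linarith)) hu''_sobolev
    rwa [(pow_eq_zero_iff two_ne_zero).1 (eq_zero_of_integrableOn_Ioi_of_tendsto henergy
      (hL.pow 2))] at hL
  obtain ⟨ℓ₀, hℓ₀, -⟩ := exists_tendsto_abs_sub_le_of_abs_deriv_deriv_le_rpow two_pos
    (by linarith) (fun r hr => hu r (by linarith)) (fun r hr => hu' r (by linarith))
    hu''_sobolev hu'_lim
  obtain ⟨M, R, hR, hM⟩ := exists_abs_le_mul_rpow_neg_one_of_tendsto_mul hℓ₀ 2
  obtain ⟨ℓ, hℓ, hℓ_le⟩ := exists_tendsto_abs_sub_le_of_abs_deriv_deriv_le_rpow (a := R)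
    (by linarith) (by linarith : 2 < 2 * (m : ℝ)) (fun r hr => hu r (by linarith))
    (fun r hr => hu' r (by linarith))
    (abs_deriv_deriv_mul_self_le_of_radial_eq hreg heq (by linarith) (by ring) hM)
    hu'_lim
  refine ⟨ℓ, M ^ (2 * m + 1) / (2 * m - 1) / (2 * m - 2), R, by linarith,
    fun r hr => abs_sub_div_le_of_abs_mul_sub_le (by linarith) ?_, hℓ⟩
  convert hℓ_le r hr using 3
  push_cast [show 1 ≤ 2 * m by omega]
  ring

/-- Asymptotics of finite-energy radial stationary solutions: if `Q` is a
radial C² solution of `-ΔQ = |Q|^{2m} Q` on `{|x|>1}` with the radial Sobolev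
bound `|Q(r)| ≤ C r^{-1/2}` and finite exterior energy, then there is
`ℓ ∈ ℝ` with `|Q(r) - ℓ/r| ≤ C' r^{-(2m-1)}` for large `r`; in particular
`r Q(r) → ℓ` as `r → ∞`. -/
theorem stationary_solution_asymptotics
    (m : ℕ) (hm : 2 < m) (Q : ℝ → ℝ)
    (hreg : ContDiffOn ℝ 2 Q (Ioi 1))
    (heq : ∀ r : ℝ, 1 < r →
      deriv (deriv Q) r + (2 / r) * deriv Q r + |Q r| ^ (2 * m) * Q r = 0)
    (C : ℝ) (hC : 0 < C)
    (hbound : ∀ r : ℝ, 1 ≤ r → |Q r| ≤ C * r ^ (-(1:ℝ)/2))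
    (henergy : IntegrableOn (fun r => (deriv (fun ρ => ρ * Q ρ) r)^2) (Ioi 1)) :
    ∃ ℓ : ℝ, ∃ C' : ℝ, ∃ R0 : ℝ, 1 < R0 ∧
      (∀ r : ℝ, R0 ≤ r → |Q r - ℓ / r| ≤ C' / r ^ (2 * m - 1)) ∧
      Tendsto (fun r => r * Q r) atTop (nhds ℓ) :=
  stationary_solution_asymptotics_general m hm Q hreg heq C hbound henergy
end

section
/- Let $m > 2$ be an integer. Suppose $Q$ and $Y$ are two radial $C^2$ solutions of $-\Delta u = |u|^{2m}u$ on $\{|x|>1\}$ such that $|Q(r)| + |Y(r)| \leq C/r$ for all $r \geq 1$ and $\lim_{r\to\infty} r(Q(r)-Y(r)) = 0$ with $|r Q(r) - r Y(r)| \leq C r^{-(2m-2)}$ for large $r$. Then $Q \equiv Y$ on $\{r > 1\}$. -/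
/-!
Put `G r = r (Q r - Y r)`. The radial equation gives `G'' = -r (F Q - F Y)` with `F x = |x|^{2m} x`,
and the decay `|Q|, |Y| ≤ C / r` turns this into `|G''| ≤ K r^{-2m} |G|`. Comparing with
`t ↦ B t^{-j} / (j (j + 1))` by convexity, a function tending to `0` with `|g''| ≤ B t^{-(j+2)}`
satisfies `|g| ≤ B t^{-j} / (j (j + 1))`; for `G` this bounds `sup_{[ρ,∞)} |G|` by
`K ρ^{-(2m-2)} sup_{[ρ,∞)} |G|`, so `G` vanishes near infinity. Grönwall's inequality for the
system `(G, G')`, run backwards from a point where both vanish, then gives `G = 0` on `(1, ∞)`.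
-/

open Real Set Filter Topology

theorem abs_pow_mul_self_sub_le (k : ℕ) (a b : ℝ) :
    |(|a| ^ (2 * k) * a - |b| ^ (2 * k) * b)| ≤ (2 * k + 1) * max |a| |b| ^ (2 * k) * |a - b| := by
  simp only [(even_two_mul k).pow_abs, ← pow_succ]
  have := abs_pow_sub_pow_le a b (2 * k + 1)
  push_cast at this
  simpa only [Nat.add_sub_cancel, mul_comm, mul_left_comm] using this

theorem abs_mul_sub_le_of_abs_add_abs_le (k : ℕ) {C t a b : ℝ} (ht : 0 < t)
    (hab : |a| + |b| ≤ C / t) :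
    |t * (|a| ^ (2 * k) * a - |b| ^ (2 * k) * b)| ≤
      (2 * k + 1) * C ^ (2 * k) / t ^ (2 * k) * |t * a - t * b| := by
  have hmax : max |a| |b| ≤ C / t :=
    max_le (by linarith [abs_nonneg b]) (by linarith [abs_nonneg a])
  calc |t * (|a| ^ (2 * k) * a - |b| ^ (2 * k) * b)|
        = t * |(|a| ^ (2 * k) * a - |b| ^ (2 * k) * b)| := by rw [abs_mul, abs_of_pos ht]
    _ ≤ t * ((2 * k + 1) * max |a| |b| ^ (2 * k) * |a - b|) := by
        gcongr; exact abs_pow_mul_self_sub_le k a b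
    _ ≤ t * ((2 * k + 1) * (C / t) ^ (2 * k) * |a - b|) := by gcongr
    _ = (2 * k + 1) * C ^ (2 * k) / t ^ (2 * k) * |t * a - t * b| := by
        rw [← mul_sub, abs_mul, abs_of_pos ht, div_pow]
        ring

theorem ContDiffOn.hasDerivAt_radial {u : ℝ → ℝ} {s : Set ℝ} (hu : ContDiffOn ℝ 2 u s)
    (hs : IsOpen s) {t : ℝ} (ht : t ∈ s) (ht0 : t ≠ 0) :
    HasDerivAt (fun r => r * u r) (u t + t * deriv u t) t ∧
      HasDerivAt (fun r => u r + r * deriv u r)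
        (t * (deriv (deriv u) t + 2 / t * deriv u t)) t := by
  have hd : HasDerivAt u (deriv u t) t :=
    ((hu.differentiableOn (by norm_num)).differentiableAt (hs.mem_nhds ht)).hasDerivAt
  have hd2 : HasDerivAt (deriv u) (deriv (deriv u) t) t :=
    (((hu.deriv_of_isOpen hs (m := 1) (by norm_num)).differentiableOn one_ne_zero).differentiableAt
      (hs.mem_nhds ht)).hasDerivAt
  refine ⟨by simpa using (hasDerivAt_id t).fun_mul hd, ?_⟩
  refine (hd.fun_add ((hasDerivAt_id t).fun_mul hd2)).congr_deriv ?_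
  field_simp
  simp
  ring

theorem ConvexOn.nonneg_of_tendsto_zero {f : ℝ → ℝ} {R : ℝ} (hf : ConvexOn ℝ (Ici R) f)
    (hlim : Tendsto f atTop (𝓝 0)) {x : ℝ} (hx : R ≤ x) : 0 ≤ f x := by
  have hanti : ∀ y, x < y → f y ≤ f x := by
    intro y hxy
    have hslope : Tendsto (fun z => (f z - f y) / (z - y)) atTop (𝓝 0) :=
      (hlim.sub_const _).div_atTop (tendsto_atTop_add_const_right _ _ tendsto_id)
    have : (f y - f x) / (y - x) ≤ 0 :=
      ge_of_tendsto hslope <| (eventually_gt_atTop y).mono fun z hyz =>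
        hf.slope_mono_adjacent hx (hx.trans (hxy.trans hyz).le) hxy hyz
    rwa [div_le_iff₀ (sub_pos.2 hxy), zero_mul, sub_nonpos] at this
  exact le_of_tendsto hlim ((eventually_gt_atTop x).mono hanti)

section DecayAtInfinity

variable {g g' g'' : ℝ → ℝ} {R B : ℝ} {j : ℕ}

theorem le_div_pow_of_deriv_deriv_le (hR : 0 < R) (hj : j ≠ 0)
    (hg : ∀ t ∈ Ici R, HasDerivAt g (g' t) t) (hg' : ∀ t ∈ Ici R, HasDerivAt g' (g'' t) t)
    (hB : ∀ t ∈ Ici R, g'' t ≤ B / t ^ (j + 2)) (hlim : Tendsto g atTop (𝓝 0)) :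
    ∀ t ∈ Ici R, g t ≤ B / (j * (j + 1) * t ^ j) := by
  set c := B / (j * (j + 1))
  set u := fun t : ℝ => c * t ^ (-(j : ℤ)) - g t
  set u' := fun t : ℝ => c * (((-j : ℤ) : ℝ) * t ^ (-(j : ℤ) - 1)) - g' t
  have hu : ∀ t ∈ Ici R, HasDerivAt u (u' t) t := fun t ht =>
    ((hasDerivAt_zpow (-j) t (Or.inl (hR.trans_le ht).ne')).const_mul c).fun_sub (hg t ht)
  have hu' : ∀ t ∈ Ici R, HasDerivAt u' (B / t ^ (j + 2) - g'' t) t := by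
    intro t ht
    have ht0 : t ≠ 0 := (hR.trans_le ht).ne'
    refine ((((hasDerivAt_zpow (-j - 1) t (Or.inl ht0)).const_mul ((-j : ℤ) : ℝ)).const_mul
      c).fun_sub (hg' t ht)).congr_deriv ?_
    rw [show -(j : ℤ) - 1 - 1 = -((j + 2 : ℕ) : ℤ) by push_cast; ring, zpow_neg, zpow_natCast]
    simp only [c]
    field_simp
    push_cast
    ring
  have hconv : ConvexOn ℝ (Ici R) u := by
    refine convexOn_of_hasDerivWithinAt2_nonneg (convex_Ici R) (f' := u')
      (f'' := fun t => B / t ^ (j + 2) - g'' t)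
      (fun t ht => (hu t ht).continuousAt.continuousWithinAt) ?_ ?_ ?_ <;>
      rw [interior_Ici] <;> intro t ht
    · exact (hu t (mem_Ici.2 ht.le)).hasDerivWithinAt
    · exact (hu' t (mem_Ici.2 ht.le)).hasDerivWithinAt
    · exact sub_nonneg.2 (hB t (mem_Ici.2 ht.le))
  have hulim : Tendsto u atTop (𝓝 0) := by
    simpa [u] using (tendsto_const_mul_zpow_atTop_zero (c := c) (by omega : -(j : ℤ) < 0)).sub hlim
  intro t ht
  have := hconv.nonneg_of_tendsto_zero hulim ht
  rw [sub_nonneg, zpow_neg, zpow_natCast] at this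
  convert this using 1
  simp only [c]
  field_simp

theorem abs_le_div_pow_of_abs_deriv_deriv_le (hR : 0 < R) (hj : j ≠ 0)
    (hg : ∀ t ∈ Ici R, HasDerivAt g (g' t) t) (hg' : ∀ t ∈ Ici R, HasDerivAt g' (g'' t) t)
    (hB : ∀ t ∈ Ici R, |g'' t| ≤ B / t ^ (j + 2)) (hlim : Tendsto g atTop (𝓝 0)) :
    ∀ t ∈ Ici R, |g t| ≤ B / (j * (j + 1) * t ^ j) := by
  intro t ht
  refine abs_le.2 ⟨?_, le_div_pow_of_deriv_deriv_le hR hj hg hg'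
    (fun s hs => (le_abs_self _).trans (hB s hs)) hlim t ht⟩
  have := le_div_pow_of_deriv_deriv_le hR hj (fun s hs => (hg s hs).fun_neg)
    (fun s hs => (hg' s hs).fun_neg) (fun s hs => (neg_le_abs _).trans (hB s hs))
    (by simpa using hlim.neg) t ht
  linarith

end DecayAtInfinity

theorem eventually_eq_zero_of_abs_deriv_deriv_le {G G' G'' : ℝ → ℝ} {R K : ℝ} {j : ℕ}
    (hR : 0 < R) (hj : j ≠ 0) (hK : 0 ≤ K)
    (hG : ∀ t ∈ Ici R, HasDerivAt G (G' t) t) (hG' : ∀ t ∈ Ici R, HasDerivAt G' (G'' t) t)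
    (hbound : ∀ t ∈ Ici R, |G'' t| ≤ K / t ^ (j + 2) * |G t|) (hlim : Tendsto G atTop (𝓝 0)) :
    ∀ᶠ t in atTop, G t = 0 := by
  obtain ⟨r₀, hr₀⟩ := eventually_atTop.1 <|
    hlim.abs.eventually (ge_mem_nhds (show |(0 : ℝ)| < 1 by simp))
  set ρ := max (max R r₀) (max 1 (2 * K))
  have hρR : Ici ρ ⊆ Ici R := Ici_subset_Ici.2 ((le_max_left _ _).trans (le_max_left _ _))
  have hρ1 : 1 ≤ ρ := (le_max_left _ _).trans (le_max_right _ _)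
  have hρK : 2 * K ≤ ρ := (le_max_right _ _).trans (le_max_right _ _)
  -- one pass through the decay estimate halves a bound on `[ρ, ∞)`, as `t ≥ ρ ≥ 2 K` there
  have hhalf : ∀ n : ℕ, ∀ t ∈ Ici ρ, |G t| ≤ (1 / 2) ^ n := by
    intro n
    induction n with
    | zero =>
      intro t ht
      simpa using hr₀ t (((le_max_right _ _).trans (le_max_left _ _)).trans ht)
    | succ n ih =>
      intro t ht
      have ht1 : 1 ≤ t := hρ1.trans ht
      have hG''n : ∀ s ∈ Ici ρ, |G'' s| ≤ K * (1 / 2) ^ n / s ^ (j + 2) := fun s hs => by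
        have hs0 : 0 < s := zero_lt_one.trans_le (hρ1.trans hs)
        rw [mul_div_right_comm]
        exact (hbound s (hρR hs)).trans (by gcongr; exact ih s hs)
      have htj : t ≤ j * (j + 1) * t ^ j := by
        have hj1 : (1 : ℝ) ≤ j := by exact_mod_cast Nat.one_le_iff_ne_zero.2 hj
        calc t ≤ t ^ j := le_self_pow₀ ht1 hj
          _ ≤ j * (j + 1) * t ^ j := le_mul_of_one_le_left (by positivity) (by nlinarith)
      calc |G t| ≤ K * (1 / 2) ^ n / (j * (j + 1) * t ^ j) :=
            abs_le_div_pow_of_abs_deriv_deriv_le (hR.trans_le (hρR self_mem_Ici)) hj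
              (fun s hs => hG s (hρR hs)) (fun s hs => hG' s (hρR hs)) hG''n hlim t ht
        _ ≤ K * (1 / 2) ^ n / t := by gcongr
        _ ≤ (1 / 2) ^ (n + 1) := by
            rw [div_le_iff₀ (by linarith), pow_succ]
            nlinarith [pow_pos (one_half_pos (α := ℝ)) n, hρK.trans ht]
  filter_upwards [eventually_ge_atTop ρ] with t ht
  refine abs_nonpos_iff.1 (ge_of_tendsto' (tendsto_pow_atTop_nhds_zero_of_lt_one ?_ ?_)
    fun n => hhalf n t ht) <;> norm_num

theorem eq_zero_of_norm_deriv_le_mul_norm_self_backward {E : Type*} [NormedAddCommGroup E]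
    [NormedSpace ℝ E] {f f' : ℝ → E} {K a b : ℝ} (hf : ∀ x ∈ Icc a b, HasDerivAt f (f' x) x)
    (hb : f b = 0) (bound : ∀ x ∈ Icc a b, ‖f' x‖ ≤ K * ‖f x‖) : ∀ x ∈ Icc a b, f x = 0 := by
  have hneg : ∀ {x}, x ∈ Icc (-b) (-a) → -x ∈ Icc a b := fun hx =>
    ⟨le_neg_of_le_neg hx.2, neg_le_of_neg_le hx.1⟩
  have hrefl : ∀ x ∈ Icc (-b) (-a), HasDerivAt (fun y => f (-y)) (-f' (-x)) x := fun x hx => by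
    simpa [Function.comp_def] using (hf (-x) (hneg hx)).scomp x (hasDerivAt_neg x)
  intro x hx
  simpa using eq_zero_of_abs_deriv_le_mul_abs_self_of_eq_zero_right
    (fun y hy => (hrefl y hy).continuousAt.continuousWithinAt)
    (fun y hy => (hrefl y (Ico_subset_Icc_self hy)).hasDerivWithinAt) (by simpa using hb)
    (fun y hy => by simpa using bound (-y) (hneg (Ico_subset_Icc_self hy))) (-x)
    ⟨neg_le_neg hx.2, neg_le_neg hx.1⟩

theorem eqOn_zero_of_abs_deriv_deriv_le_of_eventually_eq_zero {G G' G'' : ℝ → ℝ} {K a : ℝ}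
    (hG : ∀ t ∈ Ici a, HasDerivAt G (G' t) t) (hG' : ∀ t ∈ Ici a, HasDerivAt G' (G'' t) t)
    (hbound : ∀ t ∈ Ici a, |G'' t| ≤ K * |G t|) (htail : ∀ᶠ t in atTop, G t = 0) :
    EqOn G 0 (Ici a) := by
  obtain ⟨ρ, hρ⟩ := eventually_atTop.1 htail
  intro t ht
  set b := max ρ t + 1
  have htb : t ≤ b := (le_max_right _ _).trans (le_add_of_nonneg_right zero_le_one)
  have hGb : G =ᶠ[𝓝 b] 0 := eventually_of_mem (Ioi_mem_nhds (lt_add_one (max ρ t)))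
    fun s hs => hρ s ((le_max_left _ _).trans (le_of_lt hs))
  have hG'b : G' b = 0 :=
    (hG b (mem_Ici.2 (ht.trans htb))).unique ((hasDerivAt_const b 0).congr_of_eventuallyEq hGb)
  have hsys := eq_zero_of_norm_deriv_le_mul_norm_self_backward (K := max 1 K)
    (f := fun s => (G s, G' s)) (f' := fun s => (G' s, G'' s))
    (fun s hs => (hG s (ht.trans hs.1)).prodMk (hG' s (ht.trans hs.1)))
    (by simp [hGb.self_of_nhds, hG'b]) ?_ t ⟨le_rfl, htb⟩
  · exact congrArg Prod.fst hsys
  intro s hs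
  have hK1 : 0 ≤ max 1 K := zero_le_one.trans (le_max_left _ _)
  simp only [Prod.norm_def, Real.norm_eq_abs]
  refine max_le ?_ ?_
  · exact (le_max_right _ _).trans
      (le_mul_of_one_le_left ((abs_nonneg _).trans (le_max_left _ _)) (le_max_left _ _))
  · calc |G'' s| ≤ K * |G s| := hbound s (ht.trans hs.1)
      _ ≤ max 1 K * |G s| := mul_le_mul_of_nonneg_right (le_max_right _ _) (abs_nonneg _)
      _ ≤ max 1 K * max |G s| |G' s| := mul_le_mul_of_nonneg_left (le_max_left _ _) hK1

theorem stationary_solution_uniqueness_general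
    (m : ℕ) (hm : 2 < m) (Q Y : ℝ → ℝ)
    (hregQ : ContDiffOn ℝ 2 Q (Ioi 1)) (hregY : ContDiffOn ℝ 2 Y (Ioi 1))
    (heqQ : ∀ r : ℝ, 1 < r →
      deriv (deriv Q) r + (2 / r) * deriv Q r + |Q r| ^ (2 * m) * Q r = 0)
    (heqY : ∀ r : ℝ, 1 < r →
      deriv (deriv Y) r + (2 / r) * deriv Y r + |Y r| ^ (2 * m) * Y r = 0)
    (C : ℝ)
    (hbound : ∀ r : ℝ, 1 ≤ r → |Q r| + |Y r| ≤ C / r)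
    (hlim : Tendsto (fun r => r * (Q r - Y r)) atTop (nhds 0)) :
    ∀ r : ℝ, 1 < r → Q r = Y r := by
  set K : ℝ := (2 * m + 1) * C ^ (2 * m)
  have hK : 0 ≤ K := mul_nonneg (by positivity) ((even_two_mul m).pow_nonneg C)
  set G : ℝ → ℝ := fun r => r * Q r - r * Y r
  set G' : ℝ → ℝ := fun r => (Q r + r * deriv Q r) - (Y r + r * deriv Y r)
  set G'' : ℝ → ℝ := fun r => -(r * (|Q r| ^ (2 * m) * Q r - |Y r| ^ (2 * m) * Y r))
  have hderiv : ∀ t ∈ Ioi (1 : ℝ), HasDerivAt G (G' t) t ∧ HasDerivAt G' (G'' t) t := by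
    intro t ht
    have ht0 : t ≠ 0 := (zero_lt_one.trans ht).ne'
    obtain ⟨hQ, hQ'⟩ := hregQ.hasDerivAt_radial isOpen_Ioi ht ht0
    obtain ⟨hY, hY'⟩ := hregY.hasDerivAt_radial isOpen_Ioi ht ht0
    refine ⟨hQ.fun_sub hY, (hQ'.fun_sub hY').congr_deriv ?_⟩
    linear_combination t * heqQ t ht - t * heqY t ht
  have hG''_le : ∀ t ∈ Ici (1 : ℝ), |G'' t| ≤ K / t ^ (2 * m) * |G t| := fun t ht => by
    simpa only [G'', abs_neg] using
      abs_mul_sub_le_of_abs_add_abs_le m (zero_lt_one.trans_le ht) (hbound t ht)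
  have htail : ∀ᶠ t in atTop, G t = 0 :=
    eventually_eq_zero_of_abs_deriv_deriv_le (R := 2) (j := 2 * m - 2) two_pos (by omega) hK
      (fun t ht => (hderiv t (mem_Ioi.2 (one_lt_two.trans_le ht))).1)
      (fun t ht => (hderiv t (mem_Ioi.2 (one_lt_two.trans_le ht))).2)
      (fun t ht => by
        rw [show 2 * m - 2 + 2 = 2 * m by omega]
        exact hG''_le t (mem_Ici.2 (one_le_two.trans ht)))
      (by simpa only [mul_sub] using hlim)
  intro r hr
  have hGr : G r = 0 := eqOn_zero_of_abs_deriv_deriv_le_of_eventually_eq_zero (K := K)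
    (fun t ht => (hderiv t (hr.trans_le ht)).1) (fun t ht => (hderiv t (hr.trans_le ht)).2)
    (fun t ht => (hG''_le t (hr.le.trans ht)).trans
      (mul_le_mul_of_nonneg_right (div_le_self hK (one_le_pow₀ (hr.le.trans ht))) (abs_nonneg _)))
    htail self_mem_Ici
  have hQY : r * (Q r - Y r) = 0 := by rw [mul_sub]; exact hGr
  exact sub_eq_zero.1 ((mul_eq_zero.1 hQY).resolve_left (zero_lt_one.trans hr).ne')

/-- Uniqueness from asymptotics: two radial C² solutions of
`-Δu = |u|^{2m} u` on `{|x|>1}` which both decay like `1/r` and whose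
difference satisfies `|r(Q(r) - Y(r))| ≤ C r^{-(2m-2)}` with
`r(Q(r)-Y(r)) → 0` must coincide on `{r > 1}`. -/
theorem stationary_solution_uniqueness
    (m : ℕ) (hm : 2 < m) (Q Y : ℝ → ℝ)
    (hregQ : ContDiffOn ℝ 2 Q (Ioi 1)) (hregY : ContDiffOn ℝ 2 Y (Ioi 1))
    (heqQ : ∀ r : ℝ, 1 < r →
      deriv (deriv Q) r + (2 / r) * deriv Q r + |Q r| ^ (2 * m) * Q r = 0)
    (heqY : ∀ r : ℝ, 1 < r →
      deriv (deriv Y) r + (2 / r) * deriv Y r + |Y r| ^ (2 * m) * Y r = 0)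
    (C : ℝ) (hC : 0 < C)
    (hbound : ∀ r : ℝ, 1 ≤ r → |Q r| + |Y r| ≤ C / r)
    (hlim : Tendsto (fun r => r * (Q r - Y r)) atTop (nhds 0))
    (R0 : ℝ) (hR0 : 1 < R0)
    (hdiff : ∀ r : ℝ, R0 ≤ r →
      |r * Q r - r * Y r| ≤ C / r ^ (2 * m - 2)) :
    ∀ r : ℝ, 1 < r → Q r = Y r :=
  stationary_solution_uniqueness_general m hm Q Y hregQ hregY heqQ heqY C hbound hlim
end
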